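/- Let h ∈ {1,…,n} be such that |λ_h|/κ(h) < |λ_k|/κ(k) for all k ≠ h. Then the matrix S*^𝒯 = (n; δ*, σ*), with c = cos(hπ/(n+1)), δ* = 2(n c² δ − (n−1) c σ)/(n−1+2n c²), σ* = ((n−1)σ − n c δ)/(n−1+2n c²), is the UNIQUE closest matrix in 𝒮 ∩ 𝒯 to T in the Frobenius norm: every S ∈ 𝒮 ∩ 𝒯 with ‖T − S‖_F = |λ_h|/κ(h) equals S*^𝒯, and ‖T − S‖_F > |λ_h|/κ(h) for all other S ∈ 𝒮 ∩ 𝒯. -/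

import Mathlib

open Real Filter

noncomputable def tridiag (n : ℕ) (d s : ℝ) : Matrix (Fin n) (Fin n) ℝ :=
  Matrix.of fun i j =>
    if (i : ℕ) = (j : ℕ) then d
    else if (i : ℕ) + 1 = (j : ℕ) ∨ (j : ℕ) + 1 = (i : ℕ) then s else 0

noncomputable def lam (n : ℕ) (δ σ : ℝ) (h : ℕ) : ℝ :=
  δ + 2 * σ * Real.cos (h * Real.pi / (n + 1))

noncomputable def kap (n h : ℕ) : ℝ :=
  Real.sqrt (1 / (n : ℝ) + 2 / ((n : ℝ) - 1) * Real.cos (h * Real.pi / (n + 1)) ^ 2)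

noncomputable def evec (n h : ℕ) : Fin n → ℝ :=
  fun k => Real.sqrt (2 / (n + 1)) * Real.sin (h * (k.1 + 1) * Real.pi / (n + 1))

noncomputable def frobNorm {n : ℕ} (A : Matrix (Fin n) (Fin n) ℝ) : ℝ :=
  Real.sqrt (∑ i, ∑ j, A i j ^ 2)

/-!
The sine vectors `evec n k`, `1 ≤ k ≤ n`, are eigenvectors of every `tridiag n d s`, with
eigenvalues `lam n d s k`; having distinct eigenvalues they are linearly independent, so
`det (tridiag n d s) = ∏ₖ lam n d s k` and `𝒮 ∩ 𝒯` is the union of the `n` lines `lam n d s k = 0`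
in the `(d, s)`-plane. On `𝒯` the squared Frobenius norm is the quadratic form
`n d² + 2 (n - 1) s²`, so by Pythagoras the squared distance from `T` to a point `S` of the
`k`-th line is `(|λ_k| / κ(k))²` plus the squared distance from `S` to the orthogonal projection
`(δ*_k, σ*_k)` of `(δ, σ)` onto that line. Strict minimality of `h` then leaves `(δ*_h, σ*_h)`
as the unique closest point.
-/

open Matrix

lemma tridiag_apply_eq (n : ℕ) (d s : ℝ) (i j : Fin n) :
    tridiag n d s i j = (if (i : ℕ) = j then d else 0) + (if (i : ℕ) + 1 = j then s else 0)
      + (if (j : ℕ) + 1 = i then s else 0) := by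
  simp only [tridiag, of_apply]
  split_ifs <;> first | ring1 | omega

lemma tridiag_mulVec_apply (n : ℕ) (d s : ℝ) (g : ℕ → ℝ) (hg0 : g 0 = 0) (hgn : g (n + 1) = 0)
    (i : Fin n) :
    (tridiag n d s *ᵥ fun j => g (j + 1)) i = d * g (i + 1) + s * (g i + g (i + 2)) := by
  obtain ⟨i, hi⟩ := i
  have hsuper : (if i + 1 ∈ Finset.range n then s * g (i + 1 + 1) else 0) = s * g (i + 2) := by
    split_ifs with h
    · rfl
    · obtain rfl : n = i + 1 := by simp only [Finset.mem_range] at h; omega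
      simp [hgn]
  have hsub : ∑ j ∈ Finset.range n, (if j + 1 = i then s * g (j + 1) else 0) = s * g i := by
    rcases i with _ | m
    · simp [hg0]
    · simp [show m < n by omega]
  simp only [mulVec, dotProduct, tridiag_apply_eq, add_mul, ite_mul, zero_mul,
    Finset.sum_add_distrib]
  rw [Fin.sum_univ_eq_sum_range (fun j => if i = j then d * g (j + 1) else 0),
    Fin.sum_univ_eq_sum_range (fun j => if i + 1 = j then s * g (j + 1) else 0),
    Fin.sum_univ_eq_sum_range (fun j => if j + 1 = i then s * g (j + 1) else 0),
    Finset.sum_ite_eq, Finset.sum_ite_eq, if_pos (Finset.mem_range.2 hi), hsuper, hsub]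
  ring

lemma tridiag_mulVec_evec (n k : ℕ) (d s : ℝ) :
    tridiag n d s *ᵥ evec n k = lam n d s k • evec n k := by
  set θ := (k : ℝ) * π / (n + 1)
  set g : ℕ → ℝ := fun m => √(2 / (n + 1)) * sin (m * θ)
  have hev : evec n k = fun j : Fin n => g (j + 1) := by
    ext j; simp only [evec, g, θ]; push_cast; ring_nf
  have hgn : g (n + 1) = 0 := by
    have : ((n + 1 : ℕ) : ℝ) * θ = k * π := by simp only [θ]; push_cast; field_simp
    simp only [g, this, sin_nat_mul_pi, mul_zero]
  ext i
  rw [hev, tridiag_mulVec_apply n d s g (by simp [g]) hgn, Pi.smul_apply, smul_eq_mul, lam]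
  simp only [g]
  push_cast
  rw [show (i + 2 : ℝ) * θ = (i + 1) * θ + θ by ring, show (i : ℝ) * θ = (i + 1) * θ - θ by ring,
    sin_add, sin_sub]
  ring

lemma evec_ne_zero {n k : ℕ} (hk1 : 1 ≤ k) (hkn : k ≤ n) : evec n k ≠ 0 := by
  intro h0
  have h := congrFun h0 ⟨0, by omega⟩
  simp only [evec, Pi.zero_apply, CharP.cast_eq_zero, zero_add, mul_one, mul_eq_zero] at h
  have hk : (0 : ℝ) < k := by exact_mod_cast hk1
  have hkn' : (k : ℝ) < n + 1 := by exact_mod_cast Nat.lt_succ_of_le hkn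
  refine h.elim (fun h => ?_) (fun h => ?_)
  · rw [sqrt_eq_zero (by positivity)] at h
    exact absurd h (by positivity)
  · refine (sin_pos_of_pos_of_lt_pi (by positivity) ?_).ne' h
    rw [div_lt_iff₀ (by positivity)]
    nlinarith [pi_pos]

lemma linearIndependent_evec (n : ℕ) : LinearIndependent ℝ fun j : Fin n => evec n (j + 1) := by
  refine Module.End.eigenvectors_linearIndependent' (mulVecLin (tridiag n 0 1))
    (fun j : Fin n => lam n 0 1 (j + 1)) ?_ _ fun j => ⟨?_, evec_ne_zero (by omega) j.isLt⟩
  · intro i j hij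
    have hmem : ∀ j : Fin n, ((j + 1 : ℕ) : ℝ) * π / (n + 1) ∈ Set.Icc 0 π := fun j =>
      ⟨by positivity, by
        rw [div_le_iff₀ (by positivity)]
        have : ((j + 1 : ℕ) : ℝ) ≤ n + 1 := by exact_mod_cast Nat.succ_le_succ j.isLt.le
        nlinarith [pi_pos]⟩
    have := injOn_cos (hmem i) (hmem j) (by simpa [lam] using hij)
    field_simp at this
    exact Fin.ext (Nat.succ_injective (by exact_mod_cast this))
  · rw [Module.End.mem_eigenspace_iff, mulVecLin_apply, tridiag_mulVec_evec]

lemma det_tridiag (n : ℕ) (d s : ℝ) : (tridiag n d s).det = ∏ k : Fin n, lam n d s (k + 1) := by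
  set P : Matrix (Fin n) (Fin n) ℝ := of fun i j => evec n (j + 1) i
  have hP : IsUnit P.det := (isUnit_iff_isUnit_det P).1 <| linearIndependent_cols_iff_isUnit.1 <|
    linearIndependent_evec n
  have hAP : tridiag n d s * P = P * diagonal fun k : Fin n => lam n d s (k + 1) := by
    ext i j
    rw [mul_diagonal]
    simpa [P, mul_apply, mulVec, dotProduct, mul_comm] using
      congrFun (tridiag_mulVec_evec n (j + 1) d s) i
  have := congrArg det hAP
  rw [det_mul, det_mul, det_diagonal, mul_comm] at this
  exact hP.mul_left_cancel this

lemma det_tridiag_eq_zero_iff (n : ℕ) (d s : ℝ) :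
    (tridiag n d s).det = 0 ↔ ∃ k, 1 ≤ k ∧ k ≤ n ∧ lam n d s k = 0 := by
  rw [det_tridiag, Finset.prod_eq_zero_iff]
  constructor
  · rintro ⟨k, -, hk⟩
    exact ⟨k + 1, by omega, k.isLt, hk⟩
  · rintro ⟨k, hk1, hkn, hk⟩
    exact ⟨⟨k - 1, by omega⟩, Finset.mem_univ _, by simpa [Nat.sub_add_cancel hk1] using hk⟩

lemma tridiag_sub (n : ℕ) (d s d' s' : ℝ) :
    tridiag n d s - tridiag n d' s' = tridiag n (d - d') (s - s') := by
  ext i j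
  simp only [Matrix.sub_apply, tridiag, of_apply]
  split_ifs <;> ring

lemma sum_sum_ite_succ_eq (n : ℕ) (c : ℝ) :
    ∑ i : Fin n, ∑ j : Fin n, (if (i : ℕ) + 1 = j then c else 0) = (n - 1 : ℕ) * c := by
  rw [Fin.sum_univ_eq_sum_range (fun i => ∑ j : Fin n, if i + 1 = (j : ℕ) then c else 0),
    Finset.sum_congr rfl fun i _ => Fin.sum_univ_eq_sum_range (if i + 1 = · then c else 0) n]
  simp only [Finset.sum_ite_eq, Finset.mem_range]
  rw [← Finset.sum_filter, Finset.sum_const, nsmul_eq_mul,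
    show (Finset.range n).filter (· + 1 < n) = Finset.range (n - 1) by ext; simp; omega,
    Finset.card_range]

lemma sum_sum_tridiag (n : ℕ) (d s : ℝ) :
    ∑ i, ∑ j, tridiag n d s i j = n * d + 2 * (n - 1 : ℕ) * s := by
  simp only [tridiag_apply_eq, Finset.sum_add_distrib, sum_sum_ite_succ_eq]
  rw [Finset.sum_comm (f := fun i j : Fin n => if (j : ℕ) + 1 = i then s else 0),
    sum_sum_ite_succ_eq]
  simp [Fin.val_inj]
  ring

lemma frobNorm_tridiag {n : ℕ} (hn : 1 ≤ n) (a b : ℝ) :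
    frobNorm (tridiag n a b) = √(n * a ^ 2 + 2 * (n - 1) * b ^ 2) := by
  have hsq : ∀ i j, tridiag n a b i j ^ 2 = tridiag n (a ^ 2) (b ^ 2) i j := by
    intro i j
    simp only [tridiag, of_apply]
    split_ifs <;> ring
  simp only [frobNorm, hsq, sum_sum_tridiag, Nat.cast_sub hn, Nat.cast_one]

lemma frobNorm_nonneg {n : ℕ} (A : Matrix (Fin n) (Fin n) ℝ) : 0 ≤ frobNorm A := sqrt_nonneg _

lemma frobNorm_eq_zero_iff {n : ℕ} {A : Matrix (Fin n) (Fin n) ℝ} : frobNorm A = 0 ↔ A = 0 := by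
  rw [frobNorm, sqrt_eq_zero (by positivity),
    Finset.sum_eq_zero_iff_of_nonneg fun i _ => Finset.sum_nonneg fun j _ => sq_nonneg (A i j),
    ← Matrix.ext_iff]
  simp_rw [Finset.sum_eq_zero_iff_of_nonneg fun j _ => sq_nonneg _]
  simp

/-- The paper's `δ*` (and `starOff` its `σ*`) with `h` replaced by `k`. -/
noncomputable def starDiag (n k : ℕ) (δ σ : ℝ) : ℝ :=
  2 * ((n : ℝ) * cos (k * π / (n + 1)) ^ 2 * δ - ((n : ℝ) - 1) * cos (k * π / (n + 1)) * σ) /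
    ((n : ℝ) - 1 + 2 * (n : ℝ) * cos (k * π / (n + 1)) ^ 2)

noncomputable def starOff (n k : ℕ) (δ σ : ℝ) : ℝ :=
  (((n : ℝ) - 1) * σ - (n : ℝ) * cos (k * π / (n + 1)) * δ) /
    ((n : ℝ) - 1 + 2 * (n : ℝ) * cos (k * π / (n + 1)) ^ 2)

lemma lam_starDiag_starOff (n k : ℕ) (δ σ : ℝ) :
    lam n (starDiag n k δ σ) (starOff n k δ σ) k = 0 := by
  simp only [lam, starDiag, starOff]
  ring

lemma abs_lam_div_kap_nonneg (n : ℕ) (δ σ : ℝ) (k : ℕ) : 0 ≤ |lam n δ σ k| / kap n k :=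
  div_nonneg (abs_nonneg _) (sqrt_nonneg _)

lemma sq_abs_lam_div_kap {n : ℕ} (hn : 2 ≤ n) (δ σ : ℝ) (k : ℕ) :
    (|lam n δ σ k| / kap n k) ^ 2 =
      lam n δ σ k ^ 2 * n * (n - 1) / (n - 1 + 2 * n * cos (k * π / (n + 1)) ^ 2) := by
  have hn1 : (1 : ℝ) < n := by exact_mod_cast hn
  have : (n : ℝ) - 1 ≠ 0 := by linarith
  rw [div_pow, sq_abs, kap, sq_sqrt (by positivity)]
  field_simp

lemma frobNorm_sub_sq_of_lam_eq_zero {n : ℕ} (hn : 2 ≤ n) (δ σ : ℝ) {k : ℕ} {d s : ℝ}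
    (hds : lam n d s k = 0) :
    frobNorm (tridiag n δ σ - tridiag n d s) ^ 2 = (|lam n δ σ k| / kap n k) ^ 2 +
      frobNorm (tridiag n (starDiag n k δ σ) (starOff n k δ σ) - tridiag n d s) ^ 2 := by
  have hn1 : (1 : ℝ) < n := by exact_mod_cast hn
  have hD : 0 < (n : ℝ) - 1 + 2 * n * cos (k * π / (n + 1)) ^ 2 :=
    add_pos_of_pos_of_nonneg (by linarith) (by positivity)
  simp only [tridiag_sub, frobNorm_tridiag (by omega : 1 ≤ n)]
  rw [sq_sqrt (by nlinarith), sq_sqrt (by nlinarith), sq_abs_lam_div_kap hn, starDiag, starOff, lam]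
  rw [lam, ← eq_neg_iff_add_eq_zero] at hds
  subst hds
  generalize cos (k * π / (n + 1)) = c at hD ⊢
  generalize hDdef : (n : ℝ) - 1 + 2 * n * c ^ 2 = D at hD ⊢
  field_simp
  rw [← hDdef]
  ring

lemma lt_frobNorm_sub_of_det_eq_zero {n : ℕ} (hn : 2 ≤ n) {δ σ : ℝ} {h : ℕ}
    (hmin : ∀ k : ℕ, 1 ≤ k → k ≤ n → k ≠ h → |lam n δ σ h| / kap n h < |lam n δ σ k| / kap n k)
    {d s : ℝ} (hdet : (tridiag n d s).det = 0)
    (hne : tridiag n d s ≠ tridiag n (starDiag n h δ σ) (starOff n h δ σ)) :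
    |lam n δ σ h| / kap n h < frobNorm (tridiag n δ σ - tridiag n d s) := by
  obtain ⟨k, hk1, hkn, hk⟩ := (det_tridiag_eq_zero_iff n d s).1 hdet
  rw [← sq_lt_sq₀ (abs_lam_div_kap_nonneg n δ σ h) (frobNorm_nonneg _),
    frobNorm_sub_sq_of_lam_eq_zero hn δ σ hk]
  rcases eq_or_ne k h with rfl | hkh
  · have := frobNorm_eq_zero_iff.not.2 (sub_ne_zero.2 hne.symm)
    exact lt_add_of_pos_right _ (pow_pos ((frobNorm_nonneg _).lt_of_ne' this) 2)
  · calc (|lam n δ σ h| / kap n h) ^ 2 < (|lam n δ σ k| / kap n k) ^ 2 :=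
          pow_lt_pow_left₀ (hmin k hk1 hkn hkh) (abs_lam_div_kap_nonneg n δ σ h) two_ne_zero
      _ ≤ _ := le_add_of_nonneg_right (sq_nonneg _)

theorem stmt_8_general (n : ℕ) (hn : 2 ≤ n) (δ σ : ℝ)
    (h : ℕ) (h1 : 1 ≤ h) (hh : h ≤ n)
    (hmin : ∀ k : ℕ, 1 ≤ k → k ≤ n → k ≠ h →
      |lam n δ σ h| / kap n h < |lam n δ σ k| / kap n k)
    (c δs σs : ℝ) (hc : c = Real.cos (h * Real.pi / (n + 1)))
    (hδs : δs = 2 * ((n : ℝ) * c ^ 2 * δ - ((n : ℝ) - 1) * c * σ) /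
      ((n : ℝ) - 1 + 2 * (n : ℝ) * c ^ 2))
    (hσs : σs = (((n : ℝ) - 1) * σ - (n : ℝ) * c * δ) /
      ((n : ℝ) - 1 + 2 * (n : ℝ) * c ^ 2)) :
    (tridiag n δs σs).det = 0 ∧
    frobNorm (tridiag n δ σ - tridiag n δs σs) = |lam n δ σ h| / kap n h ∧
    (∀ S : Matrix (Fin n) (Fin n) ℝ, S.det = 0 → (∃ d s : ℝ, S = tridiag n d s) →
      (frobNorm (tridiag n δ σ - S) = |lam n δ σ h| / kap n h → S = tridiag n δs σs) ∧
      (S ≠ tridiag n δs σs → |lam n δ σ h| / kap n h < frobNorm (tridiag n δ σ - S))) := by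
  obtain rfl : δs = starDiag n h δ σ := by rw [hδs, hc, starDiag]
  obtain rfl : σs = starOff n h δ σ := by rw [hσs, hc, starOff]
  have hstar := lam_starDiag_starOff n h δ σ
  refine ⟨(det_tridiag_eq_zero_iff n _ _).2 ⟨h, h1, hh, hstar⟩, ?_, ?_⟩
  · have := frobNorm_sub_sq_of_lam_eq_zero hn δ σ hstar
    rw [sub_self, frobNorm_eq_zero_iff.2 rfl, zero_pow two_ne_zero, add_zero] at this
    exact (sq_eq_sq₀ (frobNorm_nonneg _) (abs_lam_div_kap_nonneg n δ σ h)).1 this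
  · rintro S hdet ⟨d, s, rfl⟩
    have hlt := lt_frobNorm_sub_of_det_eq_zero hn hmin hdet
    exact ⟨fun heq => by_contra fun hne => (hlt hne).ne' heq, hlt⟩

/-- if `h` is the strict minimizer of `|λ_k|/κ(k)`, then `S*^𝒯 = (n; δ*, σ*)` is the
UNIQUE closest singular symmetric tridiagonal Toeplitz matrix to `T` in the Frobenius norm:
any `S ∈ 𝒮 ∩ 𝒯` at distance `|λ_h|/κ(h)` equals `S*^𝒯`, and every other `S ∈ 𝒮 ∩ 𝒯` is strictly
farther away. -/
theorem stmt_8 (n : ℕ) (hn : 2 ≤ n) (δ σ : ℝ) (hσ : σ ≠ 0)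
    (h : ℕ) (h1 : 1 ≤ h) (hh : h ≤ n)
    (hmin : ∀ k : ℕ, 1 ≤ k → k ≤ n → k ≠ h →
      |lam n δ σ h| / kap n h < |lam n δ σ k| / kap n k)
    (c δs σs : ℝ) (hc : c = Real.cos (h * Real.pi / (n + 1)))
    (hδs : δs = 2 * ((n : ℝ) * c ^ 2 * δ - ((n : ℝ) - 1) * c * σ) /
      ((n : ℝ) - 1 + 2 * (n : ℝ) * c ^ 2))
    (hσs : σs = (((n : ℝ) - 1) * σ - (n : ℝ) * c * δ) /
      ((n : ℝ) - 1 + 2 * (n : ℝ) * c ^ 2)) :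
    (tridiag n δs σs).det = 0 ∧
    frobNorm (tridiag n δ σ - tridiag n δs σs) = |lam n δ σ h| / kap n h ∧
    (∀ S : Matrix (Fin n) (Fin n) ℝ, S.det = 0 → (∃ d s : ℝ, S = tridiag n d s) →
      (frobNorm (tridiag n δ σ - S) = |lam n δ σ h| / kap n h → S = tridiag n δs σs) ∧
      (S ≠ tridiag n δs σs → |lam n δ σ h| / kap n h < frobNorm (tridiag n δ σ - S))) :=
  stmt_8_general n hn δ σ h h1 hh hmin c δs σs hc hδs hσs
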